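/- arXiv:2509.26547 — 3 statements merged into one kernel-verified Lean document; each statement's English description precedes it below -/
import Mathlib

section
/- Let μ be a finite measure on a measurable space and let E be a measurable set with 0 < μ(E) < ∞. Let d : E → (0,∞) be measurable and suppose there exist constants A > 0 and h, r > 0 with h ≤ r such that μ({x ∈ E : d(x) ≤ s·r}) ≤ A·s·μ(E) for all 0 < s ≤ 1. Then ∫_{x ∈ E : d(x) ≤ h} (h/d(x))^{1/2} dμ(x) ≤ C·A·(h/r)·μ(E), where C is an absolute constant. -/
open MeasureTheory

/-- Estimate of the integral I₁: under the thin boundary condition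
    μ({x ∈ E : d(x) ≤ s r}) ≤ A s μ(E) for 0 < s ≤ 1,
    one has ∫_{x ∈ E : d(x) ≤ h} (h/d(x))^{1/2} dμ ≤ C A (h/r) μ(E). -/
theorem stmt4 :
    ∃ C : ℝ, 0 < C ∧
      ∀ (α : Type) (_ : MeasurableSpace α) (μ : Measure α), IsFiniteMeasure μ →
        ∀ (E : Set α), MeasurableSet E → 0 < μ E →
        ∀ (d : α → ℝ), Measurable d → (∀ x ∈ E, 0 < d x) →
        ∀ (A h r : ℝ), 0 < A → 0 < h → h ≤ r →
          (∀ s : ℝ, 0 < s → s ≤ 1 →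
            μ {x ∈ E | d x ≤ s * r} ≤ ENNReal.ofReal (A * s) * μ E) →
          ∫ x in {x ∈ E | d x ≤ h}, Real.sqrt (h / d x) ∂μ ≤
            C * A * (h / r) * (μ E).toReal := by
  refine ⟨10, by norm_num, ?_⟩
  intro α mα μ hfin E hE hμE d hd hdpos A h r hA hh hhr hthin
  have hr : 0 < r := lt_of_lt_of_le hh hhr
  have hs2 : Real.sqrt 2 ^ 2 = 2 := Real.sq_sqrt (by norm_num)
  have hs2nonneg : (0:ℝ) ≤ Real.sqrt 2 := Real.sqrt_nonneg 2
  have hs2lt : Real.sqrt 2 ≤ 3/2 := by nlinarith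
  set f : α → ℝ := fun x => Real.sqrt (h / d x) with hfdef
  set S : Set α := {x ∈ E | d x ≤ h} with hSdef
  set T : ℕ → Set α :=
    fun k => {x ∈ E | (1/2:ℝ)^(k+1) * h < d x ∧ d x ≤ (1/2:ℝ)^k * h} with hTdef
  have hTmeas : ∀ k, MeasurableSet (T k) := fun k =>
    hE.inter ((measurableSet_lt measurable_const hd).inter
      (measurableSet_le hd measurable_const))
  -- covering
  have hcover : S ⊆ ⋃ k, T k := by
    intro x hx
    have hdx : 0 < d x := hdpos x hx.1
    have hex : ∃ k : ℕ, (1/2:ℝ)^(k+1) * h < d x := by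
      obtain ⟨n, hn⟩ := exists_pow_lt_of_lt_one (div_pos hdx hh) (by norm_num : (1/2:ℝ) < 1)
      refine ⟨n, ?_⟩
      have h1 : (1/2:ℝ)^(n+1) ≤ (1/2:ℝ)^n :=
        pow_le_pow_of_le_one (by norm_num) (by norm_num) (Nat.le_succ n)
      have h2 : (1/2:ℝ)^n * h < d x := by
        rw [lt_div_iff₀ hh] at hn
        linarith [hn]
      nlinarith [pow_pos (by norm_num : (0:ℝ) < 1/2) (n+1)]
    refine Set.mem_iUnion.2 ⟨Nat.find hex, hx.1, Nat.find_spec hex, ?_⟩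
    rcases Nat.eq_zero_or_pos (Nat.find hex) with h0 | hpos
    · rw [h0, pow_zero, one_mul]; exact hx.2
    · obtain ⟨m, hm⟩ := Nat.exists_eq_succ_of_ne_zero hpos.ne'
      have hmin := Nat.find_min hex (show m < Nat.find hex by omega)
      rw [hm]
      exact le_of_not_gt hmin
  -- pointwise bound on T k
  have hbound : ∀ k, ∀ x ∈ T k, f x ≤ Real.sqrt 2 ^ (k+1) := by
    intro k x hx
    have hdx : 0 < d x := hdpos x hx.1
    have hpow : (0:ℝ) < (1/2:ℝ)^(k+1) := pow_pos (by norm_num) _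
    have hlt : h / d x ≤ (2:ℝ)^(k+1) := by
      rw [div_le_iff₀ hdx]
      have h1 : (1/2:ℝ)^(k+1) * h < d x := hx.2.1
      have h2 : ((2:ℝ)^(k+1)) * ((1/2:ℝ)^(k+1)) = 1 := by
        rw [← mul_pow]; norm_num
      nlinarith [pow_pos (by norm_num : (0:ℝ) < 2) (k+1)]
    calc f x ≤ Real.sqrt ((2:ℝ)^(k+1)) := Real.sqrt_le_sqrt hlt
      _ = Real.sqrt 2 ^ (k+1) := by
          rw [show ((2:ℝ)^(k+1)) = (Real.sqrt 2 ^ (k+1))^2 by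
            rw [← pow_mul, mul_comm (k+1) 2, pow_mul, hs2]]
          exact Real.sqrt_sq (pow_nonneg hs2nonneg _)
  -- measure bound on T k
  have hmeasT : ∀ k, μ (T k) ≤ ENNReal.ofReal (A * ((1/2:ℝ)^k * (h/r))) * μ E := by
    intro k
    have hspos : 0 < (1/2:ℝ)^k * (h/r) :=
      mul_pos (pow_pos (by norm_num) _) (div_pos hh hr)
    have hsle : (1/2:ℝ)^k * (h/r) ≤ 1 :=
      mul_le_one₀ (pow_le_one₀ (by norm_num) (by norm_num))
        (le_of_lt (div_pos hh hr)) (div_le_one_of_le₀ hhr hr.le)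
    have hsub : T k ⊆ {x ∈ E | d x ≤ ((1/2:ℝ)^k * (h/r)) * r} := by
      intro x hx
      refine ⟨hx.1, ?_⟩
      have : ((1/2:ℝ)^k * (h/r)) * r = (1/2:ℝ)^k * h := by field_simp
      rw [this]; exact hx.2.2
    exact le_trans (measure_mono hsub) (hthin _ hspos hsle)
  -- the geometric series
  set c : ℝ := Real.sqrt 2 * (A * (h/r)) with hcdef
  set q : ℝ := Real.sqrt 2 / 2 with hqdef
  have hq0 : (0:ℝ) ≤ q := by positivity
  have hq1 : q < 1 := by rw [hqdef]; nlinarith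
  have hc0 : 0 ≤ c := by positivity
  have hbk : ∀ k : ℕ, Real.sqrt 2 ^ (k+1) * (A * ((1/2:ℝ)^k * (h/r))) = c * q^k := by
    intro k
    have h2k : ((1:ℝ)/2)^k = 1 / 2^k := by rw [div_pow, one_pow]
    have hne : (2:ℝ)^k ≠ 0 := by positivity
    rw [hcdef, hqdef, h2k, div_pow, pow_succ]
    field_simp
  have hsummable : Summable (fun k : ℕ => c * q^k) :=
    (summable_geometric_of_lt_one hq0 hq1).mul_left c
  have htsum : ∑' k : ℕ, c * q^k ≤ 10 * A * (h/r) := by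
    rw [tsum_mul_left, tsum_geometric_of_lt_one hq0 hq1]
    have h14 : (1/4:ℝ) ≤ 1 - q := by rw [hqdef]; nlinarith
    have hinv : (1 - q)⁻¹ ≤ 4 := by
      rw [inv_le_comm₀ (by linarith) (by norm_num)]
      linarith
    have hAhr : 0 ≤ A * (h/r) := by positivity
    calc c * (1-q)⁻¹ ≤ c * 4 := by
          apply mul_le_mul_of_nonneg_left hinv hc0
      _ ≤ 10 * A * (h/r) := by rw [hcdef]; nlinarith
  -- main lintegral bound
  have key : ∫⁻ x in S, ENNReal.ofReal (f x) ∂μ ≤ ENNReal.ofReal (10 * A * (h/r)) * μ E := by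
    calc ∫⁻ x in S, ENNReal.ofReal (f x) ∂μ
        ≤ ∫⁻ x in ⋃ k, T k, ENNReal.ofReal (f x) ∂μ := lintegral_mono_set hcover
      _ ≤ ∑' k, ∫⁻ x in T k, ENNReal.ofReal (f x) ∂μ := lintegral_iUnion_le _ _
      _ ≤ ∑' k, ENNReal.ofReal (c * q^k) * μ E := by
          refine ENNReal.tsum_le_tsum fun k => ?_
          calc ∫⁻ x in T k, ENNReal.ofReal (f x) ∂μ
              ≤ ∫⁻ _ in T k, ENNReal.ofReal (Real.sqrt 2 ^ (k+1)) ∂μ :=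
                setLIntegral_mono measurable_const fun x hx =>
                  ENNReal.ofReal_le_ofReal (hbound k x hx)
            _ = ENNReal.ofReal (Real.sqrt 2 ^ (k+1)) * μ (T k) := setLIntegral_const _ _
            _ ≤ ENNReal.ofReal (Real.sqrt 2 ^ (k+1)) *
                  (ENNReal.ofReal (A * ((1/2:ℝ)^k * (h/r))) * μ E) :=
                mul_le_mul_right (hmeasT k) _
            _ = ENNReal.ofReal (c * q^k) * μ E := by
                rw [← mul_assoc, ← ENNReal.ofReal_mul (pow_nonneg hs2nonneg _), hbk k]
      _ = ENNReal.ofReal (∑' k : ℕ, c * q^k) * μ E := by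
          rw [ENNReal.ofReal_tsum_of_nonneg (fun k => by positivity) hsummable,
            ENNReal.tsum_mul_right]
      _ ≤ ENNReal.ofReal (10 * A * (h/r)) * μ E :=
          mul_le_mul_left (ENNReal.ofReal_le_ofReal htsum) _
  -- convert Bochner integral to lintegral
  have hfm : Measurable f := Real.continuous_sqrt.measurable.comp (measurable_const.div hd)
  rw [integral_eq_lintegral_of_nonneg_ae (ae_of_all _ fun x => Real.sqrt_nonneg _)
    hfm.aestronglyMeasurable]
  have hne : ENNReal.ofReal (10 * A * (h/r)) * μ E ≠ ⊤ :=
    ENNReal.mul_ne_top ENNReal.ofReal_ne_top (measure_ne_top μ E)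
  calc (∫⁻ x in S, ENNReal.ofReal (f x) ∂μ).toReal
      ≤ (ENNReal.ofReal (10 * A * (h/r)) * μ E).toReal := ENNReal.toReal_mono hne key
    _ = 10 * A * (h/r) * (μ E).toReal := by
        rw [ENNReal.toReal_mul, ENNReal.toReal_ofReal (by positivity)]
end

section
/- Let μ be an n-Ahlfors regular measure on ℝ^d (with constant C₀), let B₀ be a ball of radius r₀ centered on supp μ, and let ℓ be a line segment (or fixed axis) in B₀. Then there exists a radius r ∈ [r₀/2, r₀] such that the cylinder C of radius r around the axis satisfies the thin boundary condition: μ({x ∈ 3B₀ : dist(x, ∂_l C) ≤ t r}) ≤ C t r^n for all 0 < t ≤ 1, where ∂_l C is the lateral boundary {y : dist(y, ℓ) = r} and C depends only on C₀ and n. -/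
/-!
Balls of radius `r₀ / 2` centred on a maximal `r₀ / 4`-separated subset of `supp μ ∩ 3B₀`
cover it, and a volume count bounds their number by `25 ^ d`, so the upper Ahlfors bound gives
`μ(3B₀) ≤ M := 25 ^ d C₀ r₀ ^ n`. Push `μ|3B₀` forward to `ℝ` by `x ↦ dist(x, ℓ)`. By the
Vitali covering lemma, the radii `r` at which this measure gives some interval `[r - s, r + s]`
mass more than `λ s` form a set of Lebesgue measure at most `8 M / λ`, which is less than
`r₀ / 2` for `λ = 32 M / r₀`. A radius in `[r₀ / 2, r₀]` outside this set works, with `s = t r`.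
-/

open MeasureTheory Metric

def msupport {d : ℕ} (μ : Measure (EuclideanSpace ℝ (Fin d))) :
    Set (EuclideanSpace ℝ (Fin d)) :=
  {x | ∀ r : ℝ, 0 < r → 0 < μ (ball x r)}

open ENNReal NNReal Module Set

section Packing

variable {E : Type*} [NormedAddCommGroup E] [NormedSpace ℝ E] [FiniteDimensional ℝ E]
  {x : E} {R : ℝ} {ε : ℝ≥0}

theorem Finset.card_le_of_isSeparated_subset_ball {s : Finset E} (hε : 0 < ε) (hR : 0 ≤ R)
    (hs : (s : Set E) ⊆ ball x R) (hsep : IsSeparated ε (s : Set E)) :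
    s.card ≤ ⌊(2 * R / ε + 1) ^ finrank ℝ E⌋₊ := by
  borelize E
  set μ : Measure E := Measure.addHaar
  set δ : ℝ := ε / 2
  have hδ : 0 < δ := by positivity
  have hdisj : (s : Set E).PairwiseDisjoint fun y => ball y δ := by
    intro y hy z hz hyz
    refine ball_disjoint_ball ?_
    have : ε < edist y z := hsep hy hz hyz
    rw [edist_nndist, ENNReal.coe_lt_coe, ← NNReal.coe_lt_coe, coe_nndist] at this
    linarith [show δ + δ = ε by ring]
  have hsub : (⋃ y ∈ s, ball y δ) ⊆ ball x (R + δ) :=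
    Set.iUnion₂_subset fun y hy => ball_subset_ball' (by linarith [mem_ball.1 (hs hy)])
  have hvol : (s.card : ℝ≥0∞) * ENNReal.ofReal (δ ^ finrank ℝ E) ≤
      ENNReal.ofReal ((R + δ) ^ finrank ℝ E) := by
    refine (ENNReal.mul_le_mul_iff_left (measure_ball_pos μ 0 one_pos).ne'
      measure_ball_lt_top.ne).1 ?_
    calc (s.card : ℝ≥0∞) * ENNReal.ofReal (δ ^ finrank ℝ E) * μ (ball 0 1)
        = ∑ y ∈ s, μ (ball y δ) := by
          simp [Measure.addHaar_ball_of_pos μ _ hδ, mul_assoc]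
      _ = μ (⋃ y ∈ s, ball y δ) :=
          (measure_biUnion_finset hdisj fun _ _ => measurableSet_ball).symm
      _ ≤ μ (ball x (R + δ)) := measure_mono hsub
      _ = _ := Measure.addHaar_ball_of_pos μ _ (by positivity)
  rw [← ENNReal.ofReal_natCast, ← ENNReal.ofReal_mul (by positivity),
    ENNReal.ofReal_le_ofReal_iff (by positivity)] at hvol
  refine Nat.le_floor ?_
  have hratio : 2 * R / ε + 1 = (R + δ) / δ := by
    simp only [δ]; field_simp
  rw [hratio, div_pow, le_div_iff₀ (by positivity)]
  exact hvol

theorem Set.encard_le_of_isSeparated_subset_ball {s : Set E} (hε : 0 < ε) (hR : 0 ≤ R)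
    (hs : s ⊆ ball x R) (hsep : IsSeparated ε s) :
    s.encard ≤ ⌊(2 * R / ε + 1) ^ finrank ℝ E⌋₊ := by
  by_contra! h
  obtain ⟨t, hts, ht⟩ := Set.exists_subset_encard_eq (Order.add_one_le_of_lt h)
  have htfin : t.Finite := Set.finite_of_encard_eq_coe ht
  have := Finset.card_le_of_isSeparated_subset_ball hε hR (x := x) (s := htfin.toFinset)
    (by simpa using hts.trans hs) (by simpa using hsep.subset hts)
  have hcard : (htfin.toFinset.card : ℕ∞) = t.encard := by
    rw [← Set.ncard_eq_toFinset_card t htfin, htfin.cast_ncard_eq]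
  rw [ht] at hcard
  norm_cast at hcard
  omega

theorem Metric.packingNumber_le_of_subset_ball {A : Set E} (hε : 0 < ε) (hR : 0 ≤ R)
    (hA : A ⊆ ball x R) : packingNumber ε A ≤ ⌊(2 * R / ε + 1) ^ finrank ℝ E⌋₊ :=
  iSup₂_le fun _s hs => iSup_le fun hsep =>
    Set.encard_le_of_isSeparated_subset_ball hε hR (hs.trans hA) hsep

theorem measure_ball_le_of_forall_mem_support_measure_ball_le [MeasurableSpace E]
    {μ : Measure E} {ρ : ℝ} {m : ℝ≥0∞} (hρ : 0 < ρ) (hm : ∀ y ∈ μ.support, μ (ball y ρ) ≤ m)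
    (hR : 0 ≤ R) : μ (ball x R) ≤ ⌊(4 * R / ρ + 1) ^ finrank ℝ E⌋₊ * m := by
  set ε : ℝ≥0 := ⟨ρ / 2, by positivity⟩
  have hε : 0 < ε := show (0 : ℝ) < ρ / 2 by positivity
  set A := ball x R ∩ μ.support
  set M := maximalSeparatedSet ε A
  have hpack : packingNumber ε A ≤ ⌊(4 * R / ρ + 1) ^ finrank ℝ E⌋₊ := by
    have hratio : 2 * R / ε + 1 = 4 * R / ρ + 1 := by
      rw [show (ε : ℝ) = ρ / 2 from rfl]; field_simp; ring
    simpa only [hratio] using packingNumber_le_of_subset_ball hε hR Set.inter_subset_left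
  have hM : M.encard ≤ ⌊(4 * R / ρ + 1) ^ finrank ℝ E⌋₊ :=
    encard_maximalSeparatedSet (ne_top_of_le_ne_top (by simp) hpack) ▸ hpack
  have hcover : A ⊆ ⋃ y ∈ M, ball y ρ := by
    have hρε : (ε : ℝ) < ρ := show ρ / 2 < ρ by linarith
    exact (isCover_maximalSeparatedSet (ne_top_of_le_ne_top (by simp) hpack)
      |>.subset_iUnion_closedBall).trans (iUnion₂_mono fun y _ => closedBall_subset_ball hρε)
  calc μ (ball x R) = μ A := (measure_inter_conull Measure.measure_compl_support).symm
    _ ≤ ∑' y : M, μ (ball y ρ) := (measure_mono hcover).trans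
        (measure_biUnion_le _ (Set.finite_of_encard_le_coe hM).countable _)
    _ ≤ ∑' _ : M, m := ENNReal.tsum_le_tsum fun y => hm y (maximalSeparatedSet_subset y.2).2
    _ = M.encard * m := ENNReal.tsum_set_const M m
    _ ≤ _ := by gcongr; exact ENat.toENNReal_le.2 hM

theorem Real.volume_setOf_exists_lt_measure_closedBall_le (ν : Measure ℝ) [IsFiniteMeasure ν]
    {c : ℝ} (hc : 0 < c) :
    volume {r : ℝ | ∃ s > 0, ENNReal.ofReal (c * s) < ν (closedBall r s)} ≤
      ENNReal.ofReal (8 / c) * ν univ := by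
  set Bad := {r : ℝ | ∃ s > 0, ENNReal.ofReal (c * s) < ν (closedBall r s)}
  choose! s hs_pos hs_lt using fun r (hr : r ∈ Bad) => hr
  have hs_le : ∀ r ∈ Bad, s r ≤ (ν univ).toReal / c := by
    intro r hr
    have := (hs_lt r hr).trans_le (measure_mono (subset_univ _))
    rw [ENNReal.ofReal_lt_iff_lt_toReal (mul_pos hc (hs_pos r hr)).le (measure_ne_top ν _)] at this
    rw [le_div_iff₀ hc]
    linarith
  obtain ⟨u, huBad, hdisj, hcover⟩ :=
    Vitali.exists_disjoint_subfamily_covering_enlargement_closedBall Bad id s _ hs_le 4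
      (by norm_num)
  have hu : u.Countable := hdisj.countable_of_nonempty_interior fun b hb => by
    simpa [interior_closedBall _ (hs_pos b (huBad hb)).ne'] using hs_pos b (huBad hb)
  have hBad : Bad ⊆ ⋃ b ∈ u, closedBall b (4 * s b) := fun r hr => by
    obtain ⟨b, hb, hsub⟩ := hcover r hr
    exact mem_biUnion hb (hsub (mem_closedBall_self (hs_pos r hr).le))
  calc volume Bad ≤ ∑' b : u, volume (closedBall (b : ℝ) (4 * s b)) :=
        (measure_mono hBad).trans (measure_biUnion_le _ hu _)
    _ = ∑' b : u, ENNReal.ofReal (8 / c) * ENNReal.ofReal (c * s b) := by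
        refine tsum_congr fun b => ?_
        rw [Real.volume_closedBall, ← ENNReal.ofReal_mul (by positivity)]
        congr 1
        field_simp
        ring
    _ ≤ ∑' b : u, ENNReal.ofReal (8 / c) * ν (closedBall (b : ℝ) (s b)) :=
        ENNReal.tsum_le_tsum fun b => by gcongr; exact (hs_lt b (huBad b.2)).le
    _ = ENNReal.ofReal (8 / c) * ν (⋃ b ∈ u, closedBall b (s b)) := by
        rw [ENNReal.tsum_mul_left]
        exact congrArg _ (measure_biUnion hu hdisj fun _ _ => measurableSet_closedBall).symm
    _ ≤ ENNReal.ofReal (8 / c) * ν univ := by gcongr; exact subset_univ _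

theorem Real.exists_mem_Icc_forall_measure_closedBall_le (ν : Measure ℝ) {a b M : ℝ}
    (hab : a < b) (hM : 0 < M) (hν : ν univ ≤ ENNReal.ofReal M) :
    ∃ r ∈ Icc a b, ∀ s > 0, ν (closedBall r s) ≤ ENNReal.ofReal (16 * M / (b - a) * s) := by
  have : IsFiniteMeasure ν := ⟨hν.trans_lt ofReal_lt_top⟩
  have hc : 0 < 16 * M / (b - a) := by have := sub_pos.2 hab; positivity
  have hsmall := volume_setOf_exists_lt_measure_closedBall_le ν hc
  have hnot : ¬ Icc a b ⊆
      {r : ℝ | ∃ s > 0, ENNReal.ofReal (16 * M / (b - a) * s) < ν (closedBall r s)} := by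
    intro hsub
    have := (measure_mono hsub).trans (hsmall.trans (mul_le_mul_right hν _))
    rw [Real.volume_Icc, ← ENNReal.ofReal_mul (by positivity),
      ENNReal.ofReal_le_ofReal_iff (by positivity)] at this
    field_simp at this
    linarith
  obtain ⟨r, hr, hrgood⟩ := not_subset.1 hnot
  exact ⟨r, hr, fun s hs => not_lt.1 fun h => hrgood ⟨s, hs, h⟩⟩

theorem MeasureTheory.Measure.map_restrict_apply_closedBall {X : Type*} [MeasurableSpace X]
    (μ : Measure X) {f : X → ℝ} (hf : Measurable f) (B : Set X) (r s : ℝ) :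
    (μ.restrict B).map f (closedBall r s) = μ {x ∈ B | |f x - r| ≤ s} := by
  rw [Measure.map_apply hf measurableSet_closedBall,
    Measure.restrict_apply (hf measurableSet_closedBall), inter_comm]
  rfl

theorem msupport_eq_support {d : ℕ} (μ : Measure (EuclideanSpace ℝ (Fin d))) :
    msupport μ = μ.support :=
  Set.ext fun _ => nhds_basis_ball.mem_measureSupport.symm

theorem measure_ball_three_mul_le {d n : ℕ} {C₀ r₀ : ℝ} (hC₀ : 0 ≤ C₀) (hr₀ : 0 < r₀)
    {μ : Measure (EuclideanSpace ℝ (Fin d))} (x₀ : EuclideanSpace ℝ (Fin d))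
    (hreg : ∀ x ∈ msupport μ, ∀ ρ : ℝ, 0 < ρ → ENNReal.ofReal ρ ≤ EMetric.diam (msupport μ) →
      μ (ball x ρ) ≤ ENNReal.ofReal (C₀ * ρ ^ n))
    (hdiam : ENNReal.ofReal r₀ ≤ EMetric.diam (msupport μ)) :
    μ (ball x₀ (3 * r₀)) ≤ ENNReal.ofReal (25 ^ d * C₀ * r₀ ^ n) := by
  have hhalf : ∀ y ∈ μ.support, μ (ball y (r₀ / 2)) ≤ ENNReal.ofReal (C₀ * r₀ ^ n) := by
    intro y hy
    refine (hreg y (msupport_eq_support μ ▸ hy) (r₀ / 2) (by positivity)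
      ((ofReal_le_ofReal (by linarith)).trans hdiam)).trans (ofReal_le_ofReal ?_)
    gcongr
    linarith
  have hcount : 4 * (3 * r₀) / (r₀ / 2) + 1 = 25 := by field_simp; norm_num
  have := measure_ball_le_of_forall_mem_support_measure_ball_le (x := x₀) (by positivity) hhalf
    (by positivity : 0 ≤ 3 * r₀)
  rw [hcount, finrank_euclideanSpace_fin,
    show ⌊(25 : ℝ) ^ d⌋₊ = 25 ^ d by exact_mod_cast Nat.floor_natCast (25 ^ d),
    ← ofReal_natCast, ← ofReal_mul (by positivity)] at this
  convert this using 2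
  push_cast
  ring

theorem stmt10_general (d n : ℕ) (C₀ : ℝ) (hC₀ : 0 < C₀) :
    ∃ C : ℝ, 0 < C ∧
      ∀ (μ : Measure (EuclideanSpace ℝ (Fin d))),
        (∀ x ∈ msupport μ, ∀ ρ : ℝ, 0 < ρ → ENNReal.ofReal ρ ≤ EMetric.diam (msupport μ) →
          ENNReal.ofReal (C₀⁻¹ * ρ ^ n) ≤ μ (ball x ρ) ∧
            μ (ball x ρ) ≤ ENNReal.ofReal (C₀ * ρ ^ n)) →
        ∀ x₀ ∈ msupport μ, ∀ r₀ : ℝ, 0 < r₀ →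
          ENNReal.ofReal r₀ ≤ EMetric.diam (msupport μ) →
          ∀ ℓ : Set (EuclideanSpace ℝ (Fin d)), ℓ.Nonempty → ℓ ⊆ ball x₀ r₀ →
            ∃ r ∈ Set.Icc (r₀ / 2) r₀,
              ∀ t : ℝ, 0 < t → t ≤ 1 →
                μ {x ∈ ball x₀ (3 * r₀) | |infDist x ℓ - r| ≤ t * r} ≤
                  ENNReal.ofReal (C * t * r₀ ^ n) := by
  refine ⟨32 * 25 ^ d * C₀, by positivity, ?_⟩
  intro μ hreg x₀ _ r₀ hr₀ hdiam ℓ _ _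
  have hf : Measurable (infDist · ℓ) := (continuous_infDist_pt ℓ).measurable
  have hmass := measure_ball_three_mul_le hC₀.le hr₀ x₀
    (fun x hx ρ hρ hρd => (hreg x hx ρ hρ hρd).2) hdiam
  obtain ⟨r, hr, hgood⟩ := Real.exists_mem_Icc_forall_measure_closedBall_le
    (M := 25 ^ d * C₀ * r₀ ^ n) ((μ.restrict (ball x₀ (3 * r₀))).map (infDist · ℓ))
    (half_lt_self hr₀) (by positivity)
    (by rwa [Measure.map_apply hf .univ, preimage_univ, Measure.restrict_apply_univ])
  refine ⟨r, hr, fun t ht _ => ?_⟩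
  rw [← Measure.map_restrict_apply_closedBall μ hf]
  refine (hgood _ (mul_pos ht (by linarith [hr.1]))).trans (ofReal_le_ofReal ?_)
  rw [show r₀ - r₀ / 2 = r₀ / 2 by ring]
  calc 16 * (25 ^ d * C₀ * r₀ ^ n) / (r₀ / 2) * (t * r)
      = 32 * 25 ^ d * C₀ * t * r₀ ^ n * (r / r₀) := by field_simp; ring
    _ ≤ 32 * 25 ^ d * C₀ * t * r₀ ^ n :=
      mul_le_of_le_one_right (by positivity) ((div_le_one hr₀).2 hr.2)

/-- Existence of a radius r ∈ [r₀/2, r₀] whose cylinder around the axis ℓ has a thin lateral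
    boundary: μ({x ∈ 3B₀ : dist(x, ∂_l C) ≤ t r}) ≤ C t r₀ⁿ for all 0 < t ≤ 1. -/
theorem stmt10 (d n : ℕ) (hn : 1 ≤ n) (C₀ : ℝ) (hC₀ : 0 < C₀) :
    ∃ C : ℝ, 0 < C ∧
      ∀ (μ : Measure (EuclideanSpace ℝ (Fin d))),
        (∀ x ∈ msupport μ, ∀ ρ : ℝ, 0 < ρ → ENNReal.ofReal ρ ≤ EMetric.diam (msupport μ) →
          ENNReal.ofReal (C₀⁻¹ * ρ ^ n) ≤ μ (ball x ρ) ∧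
            μ (ball x ρ) ≤ ENNReal.ofReal (C₀ * ρ ^ n)) →
        ∀ x₀ ∈ msupport μ, ∀ r₀ : ℝ, 0 < r₀ →
          ENNReal.ofReal r₀ ≤ EMetric.diam (msupport μ) →
          ∀ ℓ : Set (EuclideanSpace ℝ (Fin d)), ℓ.Nonempty → ℓ ⊆ ball x₀ r₀ →
            ∃ r ∈ Set.Icc (r₀ / 2) r₀,
              ∀ t : ℝ, 0 < t → t ≤ 1 →
                μ {x ∈ ball x₀ (3 * r₀) | |infDist x ℓ - r| ≤ t * r} ≤
                  ENNReal.ofReal (C * t * r₀ ^ n) :=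
  stmt10_general d n C₀ hC₀
end Packing
end

section
/- Let μ be a measure and let P be a measurable set with μ(P) > 0, and let P̃ ⊇ P be measurable with μ(P̃ \ P) ≤ t μ(P) for some 0 < t < 1/2. Let χ̃ be a measurable function with χ_P ≤ χ̃ ≤ χ_{P̃}. Then ‖ χ_P/μ(P) − χ̃ / ∫χ̃ dμ ‖_{L²(μ)} ≤ C t^{1/2} μ(P)^{-1/2}, with C an absolute constant. -/
/-!
With `a = μ P` and `I = ∫ χ̃ dμ`, the sandwich gives `a ≤ I ≤ μ P̃ ≤ (1 + t) a`, and the error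
`χ_P / a - χ̃ / I` is pointwise bounded by `(a⁻¹ - I⁻¹) χ_P + I⁻¹ χ_{P̃ \ P}`: it equals
`a⁻¹ - I⁻¹` on `P`, is `-χ̃ / I` with `0 ≤ χ̃ ≤ 1` on `P̃ \ P`, and vanishes elsewhere. The two
terms have `L²` norms at most `(t / a) √a` and `√(t a) / a`, each at most `√t / √a`, so `C = 2`.
-/

open MeasureTheory
open scoped ENNReal

def IndicatorSandwich {α : Type*} (P Q : Set α) (χ : α → ℝ) : Prop :=
  ∀ x, P.indicator (fun _ => (1 : ℝ)) x ≤ χ x ∧ χ x ≤ Q.indicator (fun _ => 1) x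

lemma integrable_indicator_one {α : Type*} [MeasurableSpace α] {μ : Measure α} {Q : Set α}
    (hQ : MeasurableSet Q) (hμQ : μ Q < ⊤) : Integrable (Q.indicator fun _ => (1 : ℝ)) μ :=
  (integrableOn_const hμQ.ne).integrable_indicator hQ

lemma eLpNorm_two_indicator_const_le {α : Type*} [MeasurableSpace α] {μ : Measure α}
    {s : Set α} {c m : ℝ} (hc : 0 ≤ c) (hm : 0 ≤ m) (hμs : μ s ≤ ENNReal.ofReal m) :
    eLpNorm (s.indicator fun _ => c) 2 μ ≤ ENNReal.ofReal (c * √m) := by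
  calc eLpNorm (s.indicator fun _ => c) 2 μ ≤ ‖c‖ₑ * μ s ^ (1 / (2 : ℝ≥0∞).toReal) :=
        eLpNorm_indicator_const_le c 2
    _ ≤ ENNReal.ofReal c * ENNReal.ofReal m ^ (1 / 2 : ℝ) := by
        rw [Real.enorm_of_nonneg hc, ENNReal.toReal_ofNat]
        gcongr
    _ = ENNReal.ofReal (c * √m) := by
        rw [ENNReal.ofReal_rpow_of_nonneg hm (by norm_num), ← Real.sqrt_eq_rpow,
          ENNReal.ofReal_mul hc]

lemma inv_sub_inv_mul_sqrt_add_inv_mul_sqrt_le {a I t : ℝ} (ha : 0 < a) (hIa : a ≤ I)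
    (hIt : I ≤ a + t * a) (ht : 0 ≤ t) (ht1 : t ≤ 1) :
    (a⁻¹ - I⁻¹) * √a + I⁻¹ * √(t * a) ≤ 2 * √t / √a := by
  have hI : 0 < I := ha.trans_le hIa
  have hinv : a⁻¹ - I⁻¹ ≤ t / a := by
    rw [inv_sub_inv ha.ne' hI.ne', div_le_div_iff₀ (by positivity) ha]
    nlinarith
  have ht_le_sqrt : t ≤ √t := Real.le_sqrt_of_sq_le (by nlinarith)
  calc (a⁻¹ - I⁻¹) * √a + I⁻¹ * √(t * a) ≤ (√t / a) * √a + a⁻¹ * (√t * √a) := by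
        rw [Real.sqrt_mul ht]
        gcongr
        exact hinv.trans (by gcongr)
    _ = 2 * √t / √a := by
        field_simp
        rw [Real.sq_sqrt ha.le]
        ring

namespace IndicatorSandwich

variable {α : Type*} {P Q : Set α} {χ : α → ℝ}

lemma nonneg (hχ : IndicatorSandwich P Q χ) (x : α) : 0 ≤ χ x :=
  (Set.indicator_nonneg (fun _ _ => zero_le_one) x).trans (hχ x).1

lemma norm_indicator_div_sub_div_le (hχ : IndicatorSandwich P Q χ) {a I : ℝ} (ha : 0 < a)
    (hIa : a ≤ I) (x : α) :
    ‖P.indicator (fun _ => (1 : ℝ)) x / a - χ x / I‖ ≤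
      P.indicator (fun _ => a⁻¹ - I⁻¹) x + (Q \ P).indicator (fun _ => I⁻¹) x := by
  have hI : 0 < I := ha.trans_le hIa
  obtain ⟨hlow, hup⟩ := hχ x
  by_cases hxP : x ∈ P
  · have hxQ : x ∈ Q := by
      by_contra hxQ
      simp [hxP, hxQ] at hlow hup
      linarith
    have hχx : χ x = 1 := by simp [hxP, hxQ] at hlow hup; linarith
    simp only [Set.indicator_of_mem hxP, hχx, one_div, add_zero,
      Set.indicator_of_notMem (fun h : x ∈ Q \ P => h.2 hxP)]
    exact (Real.norm_of_nonneg (sub_nonneg.2 (inv_anti₀ ha hIa))).le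
  by_cases hxQ : x ∈ Q
  · simp only [Set.indicator_of_notMem hxP, Set.indicator_of_mem (Set.mem_sdiff_of_mem hxQ hxP),
      Set.indicator_of_mem hxQ] at hlow hup ⊢
    rw [zero_div, zero_sub, norm_neg, Real.norm_of_nonneg (by positivity), zero_add]
    simpa using div_le_div_of_nonneg_right hup hI.le
  · have : χ x = 0 := by simp [hxP, hxQ] at hlow hup; linarith
    simp [hxP, hxQ, this]

variable [MeasurableSpace α] {μ : Measure α}

lemma integrable (hχ : IndicatorSandwich P Q χ) (hχm : Measurable χ) (hQ : MeasurableSet Q)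
    (hμQ : μ Q < ⊤) : Integrable χ μ := by
  refine (integrable_indicator_one hQ hμQ).mono' hχm.aestronglyMeasurable
    (.of_forall fun x => ?_)
  rw [Real.norm_of_nonneg (hχ.nonneg x)]
  exact (hχ x).2

lemma measureReal_le_integral (hχ : IndicatorSandwich P Q χ) (hχm : Measurable χ)
    (hP : MeasurableSet P) (hQ : MeasurableSet Q) (hμQ : μ Q < ⊤) :
    μ.real P ≤ ∫ x, χ x ∂μ := by
  rw [← integral_indicator_one hP]
  exact integral_mono_of_nonneg (.of_forall (Set.indicator_nonneg fun _ _ => zero_le_one))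
    (hχ.integrable hχm hQ hμQ) (.of_forall fun x => (hχ x).1)

lemma integral_le_measureReal (hχ : IndicatorSandwich P Q χ) (hQ : MeasurableSet Q)
    (hμQ : μ Q < ⊤) : ∫ x, χ x ∂μ ≤ μ.real Q := by
  rw [← integral_indicator_one hQ]
  exact integral_mono_of_nonneg (.of_forall hχ.nonneg) (integrable_indicator_one hQ hμQ)
    (.of_forall fun x => (hχ x).2)

end IndicatorSandwich

/-- L² approximation of a normalized indicator: if χ_P ≤ χ̃ ≤ χ_{P̃} with μ(P̃ \ P) ≤ t μ(P),
    then ‖χ_P/μ(P) − χ̃/∫χ̃ dμ‖_{L²(μ)} ≤ C t^{1/2} μ(P)^{-1/2}. -/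
theorem stmt11 :
    ∃ C : ℝ, 0 < C ∧
      ∀ (α : Type) (_ : MeasurableSpace α) (μ : Measure α)
        (P Ptilde : Set α), MeasurableSet P → MeasurableSet Ptilde →
        P ⊆ Ptilde → 0 < μ P → μ Ptilde < ⊤ →
        ∀ t : ℝ, 0 < t → t < 1 / 2 →
          μ (Ptilde \ P) ≤ ENNReal.ofReal t * μ P →
          ∀ χ : α → ℝ, Measurable χ →
            (∀ x, Set.indicator P (fun _ => (1 : ℝ)) x ≤ χ x ∧
              χ x ≤ Set.indicator Ptilde (fun _ => (1 : ℝ)) x) →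
            eLpNorm (fun x =>
                Set.indicator P (fun _ => (1 : ℝ)) x / (μ P).toReal -
                  χ x / ∫ y, χ y ∂μ) 2 μ ≤
              ENNReal.ofReal (C * Real.sqrt t / Real.sqrt (μ P).toReal) := by
  refine ⟨2, two_pos, fun α _ μ P Q hP hQ hPQ hμP hμQ t ht ht2 hdiff χ hχm hχ => ?_⟩
  change IndicatorSandwich P Q χ at hχ
  set a := (μ P).toReal
  set I := ∫ y, χ y ∂μ
  have hμP_ne_top : μ P ≠ ⊤ := measure_ne_top_of_subset hPQ hμQ.ne
  have hμPa : μ P = ENNReal.ofReal a := (ENNReal.ofReal_toReal hμP_ne_top).symm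
  have ha : 0 < a := ENNReal.toReal_pos hμP.ne' hμP_ne_top
  have hIa : a ≤ I := hχ.measureReal_le_integral hχm hP hQ hμQ
  have hI : 0 < I := ha.trans_le hIa
  have hinv : 0 ≤ a⁻¹ - I⁻¹ := sub_nonneg.2 (inv_anti₀ ha hIa)
  have hμdiff : μ (Q \ P) ≤ ENNReal.ofReal (t * a) := by rwa [ENNReal.ofReal_mul ht.le, ← hμPa]
  have hIt : I ≤ a + t * a :=
    (hχ.integral_le_measureReal hQ hμQ).trans <|
      (measureReal_sdiff_le_iff_le_add hP hPQ _ hμQ.ne).1 <|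
        ENNReal.toReal_le_of_le_ofReal (by positivity) hμdiff
  calc eLpNorm (fun x => P.indicator (fun _ => (1 : ℝ)) x / a - χ x / I) 2 μ
      ≤ eLpNorm (P.indicator (fun _ => a⁻¹ - I⁻¹) + (Q \ P).indicator (fun _ => I⁻¹)) 2 μ :=
        eLpNorm_mono_real (hχ.norm_indicator_div_sub_div_le ha hIa)
    _ ≤ eLpNorm (P.indicator (fun _ => a⁻¹ - I⁻¹)) 2 μ +
          eLpNorm ((Q \ P).indicator (fun _ => I⁻¹)) 2 μ :=
        eLpNorm_add_le (aestronglyMeasurable_const.indicator hP)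
          (aestronglyMeasurable_const.indicator (hQ.diff hP)) one_le_two
    _ ≤ ENNReal.ofReal ((a⁻¹ - I⁻¹) * √a) + ENNReal.ofReal (I⁻¹ * √(t * a)) := by
        gcongr
        · exact eLpNorm_two_indicator_const_le hinv ha.le hμPa.le
        · exact eLpNorm_two_indicator_const_le (by positivity) (by positivity) hμdiff
    _ = ENNReal.ofReal ((a⁻¹ - I⁻¹) * √a + I⁻¹ * √(t * a)) :=
        (ENNReal.ofReal_add (by positivity) (by positivity)).symm
    _ ≤ ENNReal.ofReal (2 * √t / √a) :=
        ENNReal.ofReal_le_ofReal <|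
          inv_sub_inv_mul_sqrt_add_inv_mul_sqrt_le ha hIa hIt ht.le (by linarith)
end
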